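/- Let g ≥ 1 be an integer and let N : ℕ → ℕ be a finitely supported function with N(i) = 0 whenever i < 3. Let Ntot = ∑_i N(i) and suppose A is a natural number with 2·A = ∑_i i·N(i). If (Ntot : ℤ) − A = 1 − 2g, then 5·A + 2 ≤ 30g. -/

import Mathlib

/-! Every Seifert circle meets at least three bands, so `3 Ntot ≤ 2A`; with the Euler
characteristic relation `Ntot - A = 1 - 2g` this gives `A ≤ 6g - 3`. -/

theorem Finsupp.mul_sum_le_sum_mul_of_eq_zero_of_lt (k : ℕ) (N : ℕ →₀ ℕ)
    (hN : ∀ i < k, N i = 0) :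
    k * ∑ i ∈ N.support, N i ≤ ∑ i ∈ N.support, i * N i := by
  rw [Finset.mul_sum]
  refine Finset.sum_le_sum fun i hi => Nat.mul_le_mul_right _ ?_
  by_contra! hik
  exact Finsupp.mem_support_iff.mp hi (hN i hik)

theorem improved_link_crossing_bound_general (g : ℕ) (N : ℕ →₀ ℕ)
    (hN : ∀ i < 3, N i = 0) (Ntot A : ℕ)
    (hNtot : Ntot = ∑ i ∈ N.support, N i)
    (hA : 2 * A = ∑ i ∈ N.support, i * N i)
    (hEuler : (Ntot : ℤ) - (A : ℤ) = 1 - 2 * (g : ℤ)) :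
    5 * A + 2 ≤ 30 * g := by
  have hcircles : 3 * Ntot ≤ 2 * A := by
    rw [hNtot, hA]
    exact N.mul_sum_le_sum_mul_of_eq_zero_of_lt 3 hN
  omega

/-- Improved crossing bound for the modified augmented alternating link:
the crossing number is at most `5A + 2 ≤ 30g`. -/
theorem improved_link_crossing_bound (g : ℕ) (hg : 1 ≤ g) (N : ℕ →₀ ℕ)
    (hN : ∀ i < 3, N i = 0) (Ntot A : ℕ)
    (hNtot : Ntot = ∑ i ∈ N.support, N i)
    (hA : 2 * A = ∑ i ∈ N.support, i * N i)
    (hEuler : (Ntot : ℤ) - (A : ℤ) = 1 - 2 * (g : ℤ)) :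
    5 * A + 2 ≤ 30 * g :=
  improved_link_crossing_bound_general g N hN Ntot A hNtot hA hEuler
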